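/- arXiv:2409.14749 — 2 statements merged into one kernel-verified Lean document; each statement's English description precedes it below -/
import Mathlib

section
/- Let N : [0,∞) → [0,∞) be measurable, locally integrable, and suppose there exist constants C > 0, c₀ = e^{−2C} such that for all t₀ ≥ 0 and all 0 < t < 1/2, ∫_{t₀}^{t₀+t} N(s) ds ≥ e^{−C/t}. Then, defining τ(t) = ∫_0^t N(s) ds and Q(τ) = 1/N(t(τ)) on the new timescale, for all 0 < δ < e^{−2C}: whenever ∫_{τ₁}^{τ₁+δ} Q(s) ds = t, i.e. the τ-interval [τ₁, τ₁+δ] corresponds to an interval of time-duration t in the original scale, one has t ≤ C/|ln δ|. -/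
open MeasureTheory

theorem refined_Q_bound (N : ℝ → ℝ) (C : ℝ) (hC : 0 < C)
    (hNmeas : Measurable N) (hNpos : ∀ s, 0 ≤ N s)
    (hNloc : LocallyIntegrable N volume)
    (hlow : ∀ t₀ : ℝ, 0 ≤ t₀ → ∀ t : ℝ, 0 < t → t < 1 / 2 →
      ∫ s in t₀..(t₀ + t), N s ≥ Real.exp (-C / t)) :
    ∀ t₀ : ℝ, 0 ≤ t₀ → ∀ t : ℝ, 0 < t →
      (∫ s in t₀..(t₀ + t), N s) < Real.exp (-2 * C) →
      t ≤ C / |Real.log (∫ s in t₀..(t₀ + t), N s)| := by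
  intro t₀ ht₀ t ht hδ
  set δ := ∫ s in t₀..(t₀ + t), N s with hδdef
  have hmono : ∀ t' : ℝ, 0 < t' → t' ≤ t → (∫ s in t₀..(t₀ + t'), N s) ≤ δ := by
    intro t' h1 h2
    exact intervalIntegral.integral_mono_interval (le_refl t₀) (by linarith) (by linarith)
      (Filter.Eventually.of_forall hNpos) ((hNloc.integrableOn_isCompact isCompact_uIcc).intervalIntegrable)
  rcases lt_or_ge t (1 / 2) with hlt | hge
  · have h1 : Real.exp (-C / t) ≤ δ := hlow t₀ ht₀ t ht hlt
    have hδpos : 0 < δ := lt_of_lt_of_le (Real.exp_pos _) h1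
    have hlog1 : -C / t ≤ Real.log δ := by
      have := Real.log_le_log (Real.exp_pos _) h1
      rwa [Real.log_exp] at this
    have hlog2 : Real.log δ < -2 * C := by
      have := Real.log_lt_log hδpos hδ
      rwa [Real.log_exp] at this
    have habs : |Real.log δ| = -Real.log δ := abs_of_neg (by nlinarith)
    rw [habs, le_div_iff₀ (by nlinarith)]
    have h2 : -Real.log δ ≤ C / t := by
      rw [neg_div] at hlog1; linarith
    calc t * -Real.log δ ≤ t * (C / t) := by nlinarith
      _ = C := by field_simp
  · exfalso
    have hcont : ContinuousAt (fun u : ℝ => Real.exp (-C / u)) (1 / 2) :=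
      Real.continuous_exp.continuousAt.comp
        (continuousAt_const.div continuousAt_id (by norm_num))
    have htend : Filter.Tendsto (fun u : ℝ => Real.exp (-C / u))
        (nhdsWithin (1 / 2) (Set.Iio (1 / 2))) (nhds (Real.exp (-2 * C))) := by
      have := hcont.tendsto.mono_left (nhdsWithin_le_nhds (s := Set.Iio (1 / 2 : ℝ)))
      have heq : -C / (1 / 2 : ℝ) = -2 * C := by ring
      rwa [heq] at this
    have key : Real.exp (-2 * C) ≤ δ := by
      apply le_of_tendsto htend
      have hpos : ∀ᶠ u in nhdsWithin (1 / 2 : ℝ) (Set.Iio (1 / 2)), 0 < u :=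
        eventually_nhdsWithin_of_eventually_nhds (eventually_gt_nhds (by norm_num))
      filter_upwards [hpos, self_mem_nhdsWithin] with u hu1 hu2
      exact le_trans (hlow t₀ ht₀ u hu1 hu2) (hmono u hu1 (le_trans (le_of_lt hu2) hge))
    linarith
end

section
/- Let b > 0, V_R < V_F, a > 0. Suppose n : ℝ → [0,∞) is defined by n(v) = (1/b)𝟙_{V_R ≤ v ≤ V_F} for v ≤ V_F and n(v) = (1/b)e^{−(v−V_F)/(bM)} for v > V_F, where M = 1 − (V_F − V_R)/b > 0 (requiring b > V_F − V_R). Then n ≥ 0, ∫_ℝ n(v) dv = 1, and ∫_{V_F}^∞ n(v) dv = M. -/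
/-!
On `(-∞, V_F]` the profile is the constant `1/b` on `[V_R, V_F]`, of mass `(V_F - V_R)/b = 1 - M`;
above `V_F` it is an exponential of rate `1/(bM)` and height `1/b`, of mass `bM/b = M`.
-/

open MeasureTheory Set Real

lemma exp_neg_sub_div_eq_mul_exp (A c v : ℝ) :
    exp (-(v - A) / c) = exp (A / c) * exp (-c⁻¹ * v) := by
  rw [← exp_add]
  ring_nf

lemma integrableOn_exp_neg_sub_div_Ioi (A : ℝ) {c : ℝ} (hc : 0 < c) :
    IntegrableOn (fun v => exp (-(v - A) / c)) (Ioi A) := by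
  simp_rw [exp_neg_sub_div_eq_mul_exp A c]
  exact (integrableOn_exp_mul_Ioi (by simpa using hc) A).const_mul _

lemma integral_exp_neg_sub_div_Ioi (A : ℝ) {c : ℝ} (hc : 0 < c) :
    ∫ v in Ioi A, exp (-(v - A) / c) = c := by
  simp_rw [exp_neg_sub_div_eq_mul_exp A c]
  rw [integral_const_mul, integral_exp_mul_Ioi (by simpa using hc), neg_div_neg_eq,
    mul_div_assoc', ← exp_add]
  field_simp
  simp

lemma integrableOn_indicator_const_Icc (s : Set ℝ) (a b c : ℝ) :
    IntegrableOn ((Icc a b).indicator fun _ => c) s :=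
  ((integrable_indicator_iff measurableSet_Icc).2 (integrableOn_const measure_Icc_lt_top.ne)).integrableOn

lemma setIntegral_Iic_indicator_const_Icc {a b : ℝ} (hab : a ≤ b) (c : ℝ) :
    ∫ v in Iic b, (Icc a b).indicator (fun _ => c) v = (b - a) * c := by
  rw [setIntegral_indicator measurableSet_Icc, inter_eq_right.2 Icc_subset_Iic_self,
    setIntegral_const, volume_real_Icc_of_le hab, smul_eq_mul]

theorem eternal_blowup_profile (b VR VF M : ℝ) (hb : 0 < b) (hRF : VR < VF)
    (hM : M = 1 - (VF - VR) / b) (hMpos : 0 < M)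
    (n : ℝ → ℝ)
    (hn : ∀ v, n v = if v ≤ VF then (if VR ≤ v then 1 / b else 0)
        else (1 / b) * Real.exp (-(v - VF) / (b * M))) :
    (∀ v, 0 ≤ n v) ∧ (∫ v : ℝ, n v = 1) ∧ (∫ v in Set.Ioi VF, n v = M) := by
  have hbM : 0 < b * M := mul_pos hb hMpos
  have hn_bulk : EqOn n ((Icc VR VF).indicator fun _ => 1 / b) (Iic VF) := fun v hv => by
    by_cases hRv : VR ≤ v <;> simp [hn, hv.out, hRv, indicator]
  have hn_tail : EqOn n (fun v => 1 / b * exp (-(v - VF) / (b * M))) (Ioi VF) := fun v hv => by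
    simp [hn, not_le.2 hv.out]
  have hbulk : ∫ v in Iic VF, n v = (VF - VR) / b := by
    rw [setIntegral_congr_fun measurableSet_Iic hn_bulk,
      setIntegral_Iic_indicator_const_Icc hRF.le, mul_one_div]
  have htail : ∫ v in Ioi VF, n v = M := by
    rw [setIntegral_congr_fun measurableSet_Ioi hn_tail, integral_const_mul,
      integral_exp_neg_sub_div_Ioi VF hbM]
    field_simp
  have hbulk_int : IntegrableOn n (Iic VF) :=
    (integrableOn_congr_fun hn_bulk measurableSet_Iic).2 (integrableOn_indicator_const_Icc _ _ _ _)
  have htail_int : IntegrableOn n (Ioi VF) :=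
    (integrableOn_congr_fun hn_tail measurableSet_Ioi).2
      ((integrableOn_exp_neg_sub_div_Ioi VF hbM).const_mul _)
  refine ⟨fun v => ?_, ?_, htail⟩
  · rw [hn v]
    split_ifs <;> positivity
  · rw [← intervalIntegral.integral_Iic_add_Ioi hbulk_int htail_int, hbulk, htail, hM]
    ring
end
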